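/- Let φ be twice continuously differentiable, ψ be continuously differentiable, F(z) = Σ_{k≥0} a_k z^k, and let (p_k)_{k≥0} be a probability distribution on the nonnegative integers with p_0 > 0, p_k > 0 whenever a_k ≠ 0, and Σ_{k≥1} k p_k ≤ 1. Set b_k = a_k/p_k if p_k ≠ 0 and b_k = 0 otherwise, assume b* = sup_{k≥1} |b_k| < ∞, and set w(x,t) = v(x,t)/p_0. Let T > 0 satisfy T ≤ √(2/b*) and sup_{x∈ℝ} |w(x,t)| + (t²/2)|b_0| ≤ 1 for all t ∈ [0,T). Then there exists a mild solution u of □u = F(u) on [0,T) with |u(x,t)| ≤ 1 for all (x,t) ∈ ℝ × [0,T). -/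

import Mathlib

open MeasureTheory Set

/-- The backward light cone (a triangle) of the space-time point `(x,t)`. -/
def lightCone (x t : ℝ) : Set (ℝ × ℝ) :=
  {q : ℝ × ℝ | 0 ≤ q.2 ∧ q.2 ≤ t ∧ |q.1 - x| ≤ t - q.2}

/-!
Replace `F` by the power series evaluated at the nearest point of `[-1, 1]`: this `G` agrees with
`F` on `[-1, 1]`, is bounded by `∑ |aₖ| ≤ |a₀| + b* (1 - p₀)` and is globally Lipschitz, with some
constant `K`. Picard iteration of the Duhamel map `u ↦ v + ½ ∫_Δ G(u)` converges pointwise, because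
integrating `sᵐ` over a light cone of height `t` gains a factor `t² / ((m + 1)(m + 2))`, so the
`n`-th increment is `O((K t²)ⁿ / n!)`. The fixed-point equation itself then gives
`|u| ≤ |v| + (t²/2) (|a₀| + b* (1 - p₀)) ≤ p₀ + (1 - p₀) = 1` on `[0, T)`, where `G(u) = F(u)`.
-/

open Filter Topology

theorem isClosed_setOf_mem_lightCone :
    IsClosed {pq : (ℝ × ℝ) × (ℝ × ℝ) | pq.2 ∈ lightCone pq.1.1 pq.1.2} :=
  (isClosed_le continuous_const continuous_snd.snd).inter
    ((isClosed_le continuous_snd.snd continuous_fst.snd).inter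
      (isClosed_le (continuous_snd.fst.sub continuous_fst.fst).abs
        (continuous_fst.snd.sub continuous_snd.snd)))

theorem isClosed_lightCone (x t : ℝ) : IsClosed (lightCone x t) :=
  isClosed_setOf_mem_lightCone.preimage
    (continuous_const.prodMk continuous_id : Continuous fun q : ℝ × ℝ => ((x, t), q))

theorem measurableSet_lightCone (x t : ℝ) : MeasurableSet (lightCone x t) :=
  (isClosed_lightCone x t).measurableSet

theorem lightCone_subset_Icc_prod_Icc (x t : ℝ) :
    lightCone x t ⊆ Icc (x - t) (x + t) ×ˢ Icc 0 t := by
  rintro ⟨y, s⟩ ⟨hs, hst, hy⟩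
  rw [abs_le] at hy
  exact ⟨⟨by linarith, by linarith⟩, hs, hst⟩

theorem isCompact_lightCone (x t : ℝ) : IsCompact (lightCone x t) :=
  (isCompact_Icc.prod isCompact_Icc).of_isClosed_subset (isClosed_lightCone x t)
    (lightCone_subset_Icc_prod_Icc x t)

theorem volume_lightCone_lt_top (x t : ℝ) : volume (lightCone x t) < ⊤ :=
  (isCompact_lightCone x t).measure_lt_top

theorem lightCone_eq_empty {x t : ℝ} (ht : t < 0) : lightCone x t = ∅ :=
  eq_empty_of_forall_notMem fun _ ⟨hs, hst, _⟩ => by linarith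

/-- Slicing at time `s`, the cone is an interval of length `2 (t - s)`. -/
theorem integral_lightCone_comp_snd {g : ℝ → ℝ} (hg : Continuous g) (x : ℝ) {t : ℝ}
    (ht : 0 ≤ t) :
    ∫ q in lightCone x t, g q.2 = ∫ s in 0..t, 2 * (t - s) * g s := by
  have hint : Integrable ((lightCone x t).indicator fun q => g q.2) (volume.prod volume) :=
    ((hg.comp continuous_snd).continuousOn.integrableOn_compact
      (isCompact_lightCone x t)).integrable_indicator (measurableSet_lightCone x t)
  have hslice : ∀ s, ∫ y, (lightCone x t).indicator (fun q => g q.2) (y, s) =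
      (Icc 0 t).indicator (fun s => 2 * (t - s) * g s) s := by
    intro s
    by_cases hs : s ∈ Icc 0 t
    · have hmem : ∀ y, (y, s) ∈ lightCone x t ↔ y ∈ Icc (x - (t - s)) (x + (t - s)) := by
        intro y
        change 0 ≤ s ∧ s ≤ t ∧ |y - x| ≤ t - s ↔ _
        rw [mem_Icc, abs_le]
        exact ⟨fun ⟨_, _, h1, h2⟩ => ⟨by linarith, by linarith⟩,
          fun ⟨h1, h2⟩ => ⟨hs.1, hs.2, by linarith, by linarith⟩⟩
      have hfun : (fun y => (lightCone x t).indicator (fun q => g q.2) (y, s)) =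
          (Icc (x - (t - s)) (x + (t - s))).indicator fun _ => g s := by
        ext y
        by_cases hy : (y, s) ∈ lightCone x t
        · rw [indicator_of_mem hy, indicator_of_mem ((hmem y).1 hy)]
        · rw [indicator_of_notMem hy, indicator_of_notMem (mt (hmem y).2 hy)]
      rw [hfun, indicator_of_mem hs, integral_indicator_const _ measurableSet_Icc,
        Real.volume_real_Icc_of_le (by linarith [hs.2]), smul_eq_mul]
      ring
    · have hnot : ∀ y, (y, s) ∉ lightCone x t := fun y ⟨h0, h1, _⟩ => hs ⟨h0, h1⟩
      simp [indicator_of_notMem hs, indicator_of_notMem (hnot _)]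
  rw [← integral_indicator (measurableSet_lightCone x t), Measure.volume_eq_prod,
    integral_prod_symm _ hint]
  simp_rw [hslice]
  rw [integral_indicator measurableSet_Icc, intervalIntegral.integral_of_le ht,
    integral_Icc_eq_integral_Ioc]

theorem integral_lightCone_pow (x : ℝ) {t : ℝ} (ht : 0 ≤ t) (m : ℕ) :
    ∫ q in lightCone x t, q.2 ^ m = 2 * t ^ (m + 2) / ((m + 1) * (m + 2)) := by
  rw [integral_lightCone_comp_snd (continuous_pow m) x ht]
  have hsplit : ∀ s : ℝ, 2 * (t - s) * s ^ m = 2 * t * s ^ m - 2 * s ^ (m + 1) := fun s => by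
    ring
  simp_rw [hsplit]
  rw [intervalIntegral.integral_sub ((by fun_prop : Continuous _).intervalIntegrable _ _)
      ((by fun_prop : Continuous _).intervalIntegrable _ _),
    intervalIntegral.integral_const_mul, intervalIntegral.integral_const_mul, integral_pow,
    integral_pow]
  field_simp
  push_cast
  ring

theorem abs_setIntegral_lightCone_le {f : ℝ × ℝ → ℝ} (x : ℝ) {t M : ℝ} (ht : 0 ≤ t) {m : ℕ}
    (hf : ∀ q ∈ lightCone x t, |f q| ≤ M * q.2 ^ m) :
    |∫ q in lightCone x t, f q| ≤ 2 * M * t ^ (m + 2) / ((m + 1) * (m + 2)) := by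
  have hbound : IntegrableOn (fun q : ℝ × ℝ => M * q.2 ^ m) (lightCone x t) :=
    (by fun_prop : Continuous fun q : ℝ × ℝ => M * q.2 ^ m).continuousOn.integrableOn_compact
      (isCompact_lightCone x t)
  calc |∫ q in lightCone x t, f q| ≤ ∫ q in lightCone x t, M * q.2 ^ m :=
        (Real.norm_eq_abs _).symm.trans_le <| norm_integral_le_of_norm_le hbound
          ((ae_restrict_iff' (measurableSet_lightCone x t)).2
            (ae_of_all _ fun q hq => (Real.norm_eq_abs _).trans_le (hf q hq)))
    _ = 2 * M * t ^ (m + 2) / ((m + 1) * (m + 2)) := by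
        rw [integral_const_mul, integral_lightCone_pow x ht]
        ring

theorem measurable_setIntegral_lightCone {g : ℝ × ℝ → ℝ} (hg : Measurable g) :
    Measurable fun q : ℝ × ℝ => ∫ r in lightCone q.1 q.2, g r := by
  set S := {pq : (ℝ × ℝ) × (ℝ × ℝ) | pq.2 ∈ lightCone pq.1.1 pq.1.2}
  have hS : Measurable (S.indicator fun pq => g pq.2) :=
    (hg.comp measurable_snd).indicator isClosed_setOf_mem_lightCone.measurableSet
  have hslice : ∀ q : ℝ × ℝ,
      ∫ r in lightCone q.1 q.2, g r = ∫ r, S.indicator (fun pq => g pq.2) (q, r) :=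
    fun q => (integral_indicator (measurableSet_lightCone q.1 q.2)).symm
  simp_rw [hslice]
  exact (hS.stronglyMeasurable.integral_prod_right
    (f := fun q r => S.indicator (fun pq => g pq.2) (q, r))).measurable

section PowerSeries

variable {a : ℕ → ℝ}

theorem norm_mul_pow_le (c : ℝ) {z : ℝ} (hz : |z| ≤ 1) (k : ℕ) : ‖c * z ^ k‖ ≤ |c| := by
  rw [Real.norm_eq_abs, abs_mul, abs_pow]
  exact mul_le_of_le_one_right (abs_nonneg _) (pow_le_one₀ (abs_nonneg _) hz)

theorem abs_tsum_mul_pow_le (ha : Summable fun k => |a k|) {z : ℝ} (hz : |z| ≤ 1) :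
    |∑' k, a k * z ^ k| ≤ ∑' k, |a k| := by
  have := tsum_of_norm_bounded ha.hasSum fun k => norm_mul_pow_le (a k) hz k
  rwa [Real.norm_eq_abs] at this

theorem abs_tsum_mul_pow_sub_le (ha : Summable fun k => |a k|)
    (hka : Summable fun k : ℕ => (k : ℝ) * |a k|) {z z' : ℝ} (hz : |z| ≤ 1) (hz' : |z'| ≤ 1) :
    |∑' k, a k * z ^ k - ∑' k, a k * z' ^ k| ≤ (∑' k : ℕ, (k : ℝ) * |a k|) * |z - z'| := by
  have hsum : ∀ y, |y| ≤ 1 → Summable fun k => a k * y ^ k := fun y hy =>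
    Summable.of_norm_bounded ha fun k => norm_mul_pow_le (a k) hy k
  rw [← (hsum z hz).tsum_sub (hsum z' hz'), ← Real.norm_eq_abs]
  refine tsum_of_norm_bounded (hka.hasSum.mul_right _) fun k => ?_
  have hmax : max |z| |z'| ^ (k - 1) ≤ 1 := pow_le_one₀ (by positivity) (max_le hz hz')
  calc ‖a k * z ^ k - a k * z' ^ k‖ = |a k| * |z ^ k - z' ^ k| := by
        rw [Real.norm_eq_abs, ← mul_sub, abs_mul]
    _ ≤ |a k| * (|z - z'| * k * max |z| |z'| ^ (k - 1)) :=
        mul_le_mul_of_nonneg_left (abs_pow_sub_pow_le z z' k) (abs_nonneg _)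
    _ ≤ |a k| * (|z - z'| * k * 1) := by gcongr
    _ = k * |a k| * |z - z'| := by ring

noncomputable def clampedPowerSeries (a : ℕ → ℝ) (z : ℝ) : ℝ :=
  ∑' k, a k * (projIcc (-1) 1 (by norm_num) z : ℝ) ^ k

theorem abs_projIcc_neg_one_one_le (z : ℝ) :
    |(projIcc (-1) 1 (by norm_num) z : ℝ)| ≤ 1 :=
  abs_le.2 (projIcc (-1) 1 (by norm_num) z).2

theorem clampedPowerSeries_of_abs_le {z : ℝ} (hz : |z| ≤ 1) :
    clampedPowerSeries a z = ∑' k, a k * z ^ k := by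
  rw [clampedPowerSeries, projIcc_of_mem _ (abs_le.1 hz)]

theorem abs_clampedPowerSeries_le (ha : Summable fun k => |a k|) (z : ℝ) :
    |clampedPowerSeries a z| ≤ ∑' k, |a k| :=
  abs_tsum_mul_pow_le ha (abs_projIcc_neg_one_one_le z)

theorem lipschitzWith_clampedPowerSeries (ha : Summable fun k => |a k|)
    (hka : Summable fun k : ℕ => (k : ℝ) * |a k|) :
    LipschitzWith (∑' k : ℕ, (k : ℝ) * |a k|).toNNReal (clampedPowerSeries a) :=
  LipschitzWith.of_dist_le' fun z z' => by
    rw [Real.dist_eq, Real.dist_eq]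
    exact (abs_tsum_mul_pow_sub_le ha hka (abs_projIcc_neg_one_one_le z)
      (abs_projIcc_neg_one_one_le z')).trans (mul_le_mul_of_nonneg_left
        (abs_projIcc_sub_projIcc _) (tsum_nonneg fun k => by positivity))

variable {p : ℕ → ℝ} {L : ℝ}

theorem tsum_abs_le_of_abs_le_mul (hp : HasSum p 1) (ha : Summable fun k => |a k|)
    (hap : ∀ k, |a (k + 1)| ≤ L * p (k + 1)) :
    ∑' k, |a k| ≤ |a 0| + L * (1 - p 0) := by
  have htail : HasSum (fun k => p (k + 1)) (1 - p 0) := by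
    simpa using (hasSum_nat_add_iff' 1).2 hp
  rw [ha.tsum_eq_zero_add]
  gcongr
  exact hasSum_le hap ((summable_nat_add_iff 1).2 ha).hasSum (htail.mul_left L)

theorem natCast_mul_abs_le_of_abs_le_mul (hap : ∀ k, |a (k + 1)| ≤ L * p (k + 1)) (k : ℕ) :
    (k : ℝ) * |a k| ≤ L * ((k : ℝ) * p k) := by
  cases k with
  | zero => simp
  | succ k => nlinarith [hap k, (k.cast_nonneg : (0 : ℝ) ≤ k)]

theorem summable_natCast_mul_abs_of_abs_le_mul (hmean : Summable fun k : ℕ => (k : ℝ) * p k)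
    (hap : ∀ k, |a (k + 1)| ≤ L * p (k + 1)) :
    Summable fun k : ℕ => (k : ℝ) * |a k| :=
  (hmean.mul_left L).of_nonneg_of_le (fun _ => by positivity)
    (natCast_mul_abs_le_of_abs_le_mul hap)

end PowerSeries

section Duhamel

variable {v : ℝ × ℝ → ℝ} {G : ℝ → ℝ} {K : NNReal} {B : ℝ}

variable (v G) in
/-- Mild solutions of `□u = G(u)` with free wave `v` are the fixed points of this map. -/
noncomputable def duhamel (u : ℝ × ℝ → ℝ) (q : ℝ × ℝ) : ℝ :=
  v q + (1 / 2) * ∫ r in lightCone q.1 q.2, G (u r)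

theorem duhamel_of_neg (u : ℝ × ℝ → ℝ) {q : ℝ × ℝ} (hq : q.2 < 0) : duhamel v G u q = v q := by
  simp [duhamel, lightCone_eq_empty hq]

theorem iterate_duhamel_of_neg (n : ℕ) {q : ℝ × ℝ} (hq : q.2 < 0) :
    (duhamel v G)^[n] v q = v q := by
  cases n with
  | zero => rfl
  | succ n => rw [Function.iterate_succ_apply', duhamel_of_neg _ hq]

theorem measurable_duhamel (hv : Measurable v) (hG : Measurable G) {u : ℝ × ℝ → ℝ}
    (hu : Measurable u) : Measurable (duhamel v G u) :=
  hv.add ((measurable_setIntegral_lightCone (hG.comp hu)).const_mul _)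

theorem measurable_iterate_duhamel (hv : Measurable v) (hG : Measurable G) (n : ℕ) :
    Measurable ((duhamel v G)^[n] v) := by
  induction n with
  | zero => exact hv
  | succ n ih =>
    rw [Function.iterate_succ']
    exact measurable_duhamel hv hG ih

theorem abs_duhamel_sub_le (hGB : ∀ z, |G z| ≤ B) (u : ℝ × ℝ → ℝ) {q : ℝ × ℝ} (hq : 0 ≤ q.2) :
    |duhamel v G u q - v q| ≤ B * q.2 ^ 2 / 2 := by
  have h := abs_setIntegral_lightCone_le (f := fun r => G (u r)) (M := B) (m := 0) q.1 hq
    fun r _ => by simpa using hGB (u r)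
  rw [duhamel, add_sub_cancel_left, abs_mul, abs_of_pos (by norm_num : (0 : ℝ) < 1 / 2)]
  norm_num at h
  linarith

theorem abs_le_of_isFixedPt_duhamel (hGB : ∀ z, |G z| ≤ B) {u : ℝ × ℝ → ℝ}
    (hu : Function.IsFixedPt (duhamel v G) u) {q : ℝ × ℝ} (hq : 0 ≤ q.2) :
    |u q| ≤ |v q| + B * q.2 ^ 2 / 2 := by
  have h := abs_duhamel_sub_le (v := v) hGB u hq
  rw [hu.eq] at h
  linarith [abs_sub_abs_le_abs_sub (u q) (v q)]

theorem abs_duhamel_sub_duhamel_le (hG : LipschitzWith K G) (hGB : ∀ z, |G z| ≤ B)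
    {u u' : ℝ × ℝ → ℝ} (hu : Measurable u) (hu' : Measurable u') {q : ℝ × ℝ} (hq : 0 ≤ q.2)
    {M : ℝ} {m : ℕ} (huu' : ∀ r ∈ lightCone q.1 q.2, |u r - u' r| ≤ M * r.2 ^ m) :
    |duhamel v G u q - duhamel v G u' q| ≤ K * M * q.2 ^ (m + 2) / ((m + 1) * (m + 2)) := by
  have hint : ∀ w : ℝ × ℝ → ℝ, Measurable w →
      IntegrableOn (fun r => G (w r)) (lightCone q.1 q.2) := fun w hw =>
    Measure.integrableOn_of_bounded (volume_lightCone_lt_top _ _).ne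
      (hG.continuous.measurable.comp hw).aestronglyMeasurable
      (ae_of_all _ fun r => (Real.norm_eq_abs _).trans_le (hGB (w r)))
  have hGuu' : ∀ r ∈ lightCone q.1 q.2, |G (u r) - G (u' r)| ≤ K * M * r.2 ^ m := by
    intro r hr
    calc |G (u r) - G (u' r)| ≤ K * |u r - u' r| := by
          simpa only [Real.dist_eq] using hG.dist_le_mul (u r) (u' r)
      _ ≤ K * (M * r.2 ^ m) := mul_le_mul_of_nonneg_left (huu' r hr) K.2
      _ = K * M * r.2 ^ m := by ring
  rw [duhamel, duhamel, add_sub_add_left_eq_sub, ← mul_sub,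
    ← integral_sub (hint u hu) (hint u' hu'), abs_mul, abs_of_pos (by norm_num : (0 : ℝ) < 1 / 2)]
  calc 1 / 2 * |∫ r in lightCone q.1 q.2, G (u r) - G (u' r)|
      ≤ 1 / 2 * (2 * (K * M) * q.2 ^ (m + 2) / ((m + 1) * (m + 2))) := by
        gcongr
        exact abs_setIntegral_lightCone_le q.1 hq hGuu'
    _ = K * M * q.2 ^ (m + 2) / ((m + 1) * (m + 2)) := by ring

theorem abs_iterate_duhamel_succ_sub_le (hv : Measurable v) (hG : LipschitzWith K G)
    (hGB : ∀ z, |G z| ≤ B) (n : ℕ) (q : ℝ × ℝ) :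
    |(duhamel v G)^[n + 1] v q - (duhamel v G)^[n] v q| ≤
      B * q.2 ^ 2 * ((K * q.2 ^ 2) ^ n / n.factorial) := by
  have hB : 0 ≤ B := (abs_nonneg _).trans (hGB 0)
  obtain hq | hq := lt_or_ge q.2 0
  · rw [iterate_duhamel_of_neg _ hq, iterate_duhamel_of_neg _ hq, sub_self, abs_zero]
    positivity
  induction n generalizing q with
  | zero =>
    simpa [le_div_iff₀] using (abs_duhamel_sub_le hGB v hq).trans (by nlinarith [sq_nonneg q.2])
  | succ n ih =>
    have hU := measurable_iterate_duhamel hv hG.continuous.measurable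
    have h := abs_duhamel_sub_duhamel_le (v := v) hG hGB (hU (n + 1)) (hU n) hq
      (M := B * K ^ n / n.factorial) (m := 2 * n + 2) fun r hr => (ih r hr.1).trans_eq (by ring)
    rw [← Function.iterate_succ_apply' (duhamel v G) (n + 1),
      ← Function.iterate_succ_apply' (duhamel v G) n] at h
    refine h.trans ?_
    have hX : 0 ≤ B * K ^ (n + 1) * q.2 ^ (2 * n + 4) / n.factorial := by positivity
    calc _ = B * K ^ (n + 1) * q.2 ^ (2 * n + 4) / n.factorial / ((2 * n + 3) * (2 * n + 4)) := by
          push_cast; ring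
      _ ≤ B * K ^ (n + 1) * q.2 ^ (2 * n + 4) / n.factorial / (n + 1) :=
          div_le_div_of_nonneg_left hX (by positivity) (by nlinarith)
      _ = B * q.2 ^ 2 * ((K * q.2 ^ 2) ^ (n + 1) / (n + 1).factorial) := by
          rw [Nat.factorial_succ]
          push_cast
          field_simp
          ring

theorem cauchySeq_iterate_duhamel (hv : Measurable v) (hG : LipschitzWith K G)
    (hGB : ∀ z, |G z| ≤ B) (q : ℝ × ℝ) : CauchySeq fun n => (duhamel v G)^[n] v q :=
  cauchySeq_of_dist_le_of_summable _
    (fun n => by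
      rw [Real.dist_eq, abs_sub_comm]
      exact abs_iterate_duhamel_succ_sub_le hv hG hGB n q)
    ((Real.summable_pow_div_factorial _).mul_left _)

theorem tendsto_duhamel (hG : Continuous G) (hGB : ∀ z, |G z| ≤ B) {U : ℕ → ℝ × ℝ → ℝ}
    {u : ℝ × ℝ → ℝ} (hU : ∀ n, Measurable (U n))
    (hlim : ∀ r, Tendsto (fun n => U n r) atTop (𝓝 (u r))) (q : ℝ × ℝ) :
    Tendsto (fun n => duhamel v G (U n) q) atTop (𝓝 (duhamel v G u q)) :=
  tendsto_const_nhds.add <| Tendsto.const_mul _ <|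
    tendsto_integral_of_dominated_convergence (fun _ => B)
      (fun n => (hG.measurable.comp (hU n)).aestronglyMeasurable)
      (integrableOn_const (volume_lightCone_lt_top _ _).ne)
      (fun n => ae_of_all _ fun r => (Real.norm_eq_abs _).trans_le (hGB (U n r)))
      (ae_of_all _ fun r => (hG.tendsto _).comp (hlim r))

theorem exists_measurable_isFixedPt_duhamel (hv : Measurable v) (hG : LipschitzWith K G)
    (hGB : ∀ z, |G z| ≤ B) : ∃ u, Measurable u ∧ Function.IsFixedPt (duhamel v G) u := by
  have hU := measurable_iterate_duhamel hv hG.continuous.measurable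
  have hlim := fun q => (cauchySeq_iterate_duhamel hv hG hGB q).tendsto_limUnder
  refine ⟨_, measurable_of_tendsto_metrizable hU (tendsto_pi_nhds.2 hlim), funext fun q => ?_⟩
  refine tendsto_nhds_unique (tendsto_duhamel hG.continuous hGB hU hlim q) ?_
  simpa only [Function.comp_def, Function.iterate_succ_apply'] using
    (hlim q).comp (tendsto_add_atTop_nat 1)

end Duhamel

theorem continuous_dAlembert {φ ψ : ℝ → ℝ} (hφ : Continuous φ) (hψ : Continuous ψ) :
    Continuous fun q : ℝ × ℝ =>
      (1 / 2) * (∫ y in (q.1 - q.2)..(q.1 + q.2), ψ y) +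
        (1 / 2) * (φ (q.1 + q.2) + φ (q.1 - q.2)) := by
  have hΨ := intervalIntegral.continuous_primitive (μ := volume) (hψ.intervalIntegrable · ·) 0
  have hI : Continuous fun q : ℝ × ℝ => ∫ y in (q.1 - q.2)..(q.1 + q.2), ψ y :=
    ((hΨ.comp (continuous_fst.add continuous_snd)).sub
      (hΨ.comp (continuous_fst.sub continuous_snd))).congr fun q =>
        intervalIntegral.integral_interval_sub_left (hψ.intervalIntegrable _ _)
          (hψ.intervalIntegrable _ _)
  fun_prop

theorem abs_le_mul_of_abs_ite_div_le {a p C : ℝ} (hp : 0 ≤ p) (hpos : a ≠ 0 → 0 < p)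
    (hC : |if p ≠ 0 then a / p else 0| ≤ C) : |a| ≤ C * p := by
  rcases hp.eq_or_lt with rfl | hp
  · rw [not_imp_comm.1 hpos (lt_irrefl 0)]
    simp
  · rwa [if_pos hp.ne', abs_div, abs_of_pos hp, div_le_iff₀ hp] at hC

theorem sq_mul_le_of_le_sqrt_div {t L c : ℝ} (ht : 0 ≤ t) (hL : 0 ≤ L) (hc : 0 ≤ c)
    (htL : t ≤ √(c / L)) : t ^ 2 * L ≤ c := by
  rcases hL.eq_or_lt with rfl | hL
  · simpa using hc
  · rw [← le_div_iff₀ hL]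
    exact (Real.le_sqrt ht (by positivity)).1 htL

theorem mild_solution_exists_general
    (φ ψ : ℝ → ℝ) (hφ : ContDiff ℝ 2 φ) (hψ : ContDiff ℝ 1 ψ)
    (a : ℕ → ℝ) (ha : Summable fun k => |a k|)
    (F : ℝ → ℝ) (hFdef : ∀ z : ℝ, |z| ≤ 1 → F z = ∑' k : ℕ, a k * z ^ k)
    (p : ℕ → ℝ) (hpnn : ∀ k, 0 ≤ p k) (hpsum : HasSum p 1)
    (hp0 : 0 < p 0) (hppos : ∀ k, a k ≠ 0 → 0 < p k)
    (hmean : Summable fun k : ℕ => (k : ℝ) * p k)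
    (b : ℕ → ℝ) (hb : ∀ k, b k = if p k ≠ 0 then a k / p k else 0)
    (hbdd : BddAbove (Set.range fun k : ℕ => |b (k + 1)|))
    (v w : ℝ → ℝ → ℝ)
    (hv : ∀ x t : ℝ, v x t =
      (1 / 2) * (∫ y in (x - t)..(x + t), ψ y) + (1 / 2) * (φ (x + t) + φ (x - t)))
    (hw : ∀ x t : ℝ, w x t = v x t / p 0)
    (T : ℝ)
    (hTB : T ≤ Real.sqrt (2 / (⨆ k : ℕ, |b (k + 1)|)))
    (hsmall : ∀ t : ℝ, 0 ≤ t → t < T → ∀ x : ℝ, |w x t| + t ^ 2 / 2 * |b 0| ≤ 1) :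
    ∃ u : ℝ → ℝ → ℝ,
      Measurable (fun q : ℝ × ℝ => u q.1 q.2) ∧
      (∀ x t : ℝ, 0 ≤ t → t < T → |u x t| ≤ 1) ∧
      (∀ x t : ℝ, 0 ≤ t → t < T →
        u x t = v x t + (1 / 2) * (∫ q in lightCone x t, F (u q.1 q.2))) := by
  set L := ⨆ k : ℕ, |b (k + 1)|
  have hL : 0 ≤ L := (abs_nonneg _).trans (le_ciSup hbdd 0)
  have hap : ∀ k, |a (k + 1)| ≤ L * p (k + 1) := fun k =>
    abs_le_mul_of_abs_ite_div_le (hpnn _) (hppos _) (hb (k + 1) ▸ le_ciSup hbdd k)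
  have hGB : ∀ z, |clampedPowerSeries a z| ≤ |a 0| + L * (1 - p 0) := fun z =>
    (abs_clampedPowerSeries_le ha z).trans (tsum_abs_le_of_abs_le_mul hpsum ha hap)
  have hvm : Measurable fun q : ℝ × ℝ => v q.1 q.2 := by
    simpa only [hv] using (continuous_dAlembert hφ.continuous hψ.continuous).measurable
  obtain ⟨u, hum, hfix⟩ := exists_measurable_isFixedPt_duhamel hvm
    (lipschitzWith_clampedPowerSeries ha (summable_natCast_mul_abs_of_abs_le_mul hmean hap)) hGB
  have hbound : ∀ x t, 0 ≤ t → t < T → |u (x, t)| ≤ 1 := by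
    intro x t ht htT
    have hvt : |v x t| + t ^ 2 / 2 * |a 0| ≤ p 0 := by
      have h := hsmall t ht htT x
      rw [hw, hb, if_pos hp0.ne', abs_div, abs_div, abs_of_pos hp0] at h
      have e : |v x t| / p 0 + t ^ 2 / 2 * (|a 0| / p 0) = (|v x t| + t ^ 2 / 2 * |a 0|) / p 0 := by
        ring
      rwa [e, div_le_one hp0] at h
    have htL := sq_mul_le_of_le_sqrt_div ht hL zero_le_two (htT.le.trans hTB)
    have hp1 : p 0 ≤ 1 := le_hasSum hpsum 0 fun k _ => hpnn k
    nlinarith [abs_le_of_isFixedPt_duhamel hGB hfix (q := (x, t)) ht]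
  refine ⟨fun x t => u (x, t), hum, hbound, fun x t ht htT => ?_⟩
  change u (x, t) = _
  conv_lhs => rw [← hfix.eq]
  refine congrArg (v x t + 1 / 2 * ·) (setIntegral_congr_fun (measurableSet_lightCone x t)
    fun r hr => ?_)
  have hr1 := hbound r.1 r.2 hr.1 (hr.2.1.trans_lt htT)
  rw [clampedPowerSeries_of_abs_le hr1, hFdef _ hr1]

/-- existence part of Theorem 2: if `T ≤ √(2/b*)` and
`sup_x |w(x,t)| + (t²/2)|b₀| ≤ 1` for all `t ∈ [0,T)`, then there exists a mild
solution of `□u = F(u)` on `[0,T)` bounded by `1`. -/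
theorem mild_solution_exists
    (φ ψ : ℝ → ℝ) (hφ : ContDiff ℝ 2 φ) (hψ : ContDiff ℝ 1 ψ)
    (a : ℕ → ℝ) (ha : Summable fun k => |a k|)
    (F : ℝ → ℝ) (hFdef : ∀ z : ℝ, |z| ≤ 1 → F z = ∑' k : ℕ, a k * z ^ k)
    (p : ℕ → ℝ) (hpnn : ∀ k, 0 ≤ p k) (hpsum : HasSum p 1)
    (hp0 : 0 < p 0) (hppos : ∀ k, a k ≠ 0 → 0 < p k)
    (hmean : Summable fun k : ℕ => (k : ℝ) * p k)
    (hmean1 : (∑' k : ℕ, (k : ℝ) * p k) ≤ 1)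
    (b : ℕ → ℝ) (hb : ∀ k, b k = if p k ≠ 0 then a k / p k else 0)
    (hbdd : BddAbove (Set.range fun k : ℕ => |b (k + 1)|))
    (v w : ℝ → ℝ → ℝ)
    (hv : ∀ x t : ℝ, v x t =
      (1 / 2) * (∫ y in (x - t)..(x + t), ψ y) + (1 / 2) * (φ (x + t) + φ (x - t)))
    (hw : ∀ x t : ℝ, w x t = v x t / p 0)
    (T : ℝ) (hT : 0 < T)
    (hTB : T ≤ Real.sqrt (2 / (⨆ k : ℕ, |b (k + 1)|)))
    (hsmall : ∀ t : ℝ, 0 ≤ t → t < T → ∀ x : ℝ, |w x t| + t ^ 2 / 2 * |b 0| ≤ 1) :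
    ∃ u : ℝ → ℝ → ℝ,
      Measurable (fun q : ℝ × ℝ => u q.1 q.2) ∧
      (∀ x t : ℝ, 0 ≤ t → t < T → |u x t| ≤ 1) ∧
      (∀ x t : ℝ, 0 ≤ t → t < T →
        u x t = v x t + (1 / 2) * (∫ q in lightCone x t, F (u q.1 q.2))) :=
  mild_solution_exists_general φ ψ hφ hψ a ha F hFdef p hpnn hpsum hp0 hppos hmean b hb hbdd v w hv
    hw T hTB hsmall
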